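/- arXiv:2312.13052 — 2 statements merged into one kernel-verified Lean document; each statement's English description precedes it below -/
import Mathlib

section
/- If p is an ordinary singular point of multiplicity m < 5 of a reduced plane curve, then the Tjurina number at p equals the Milnor number at p, and both equal (m-1)². -/
open MvPolynomial Finset

namespace OrdSingAux

noncomputable section

abbrev RR := MvPolynomial (Fin 2) ℂ

lemma deg2 (d : Fin 2 →₀ ℕ) : d.degree = d 0 + d 1 := by
  rw [Finsupp.degree_apply, Finset.sum_subset (Finset.subset_univ d.support)
    (by intro x _ hx; exact Finsupp.notMem_support_iff.mp hx)]
  exact Fin.sum_univ_two d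

lemma sum2 (d : Fin 2 →₀ ℕ) : (d.sum fun _ e => e) = d 0 + d 1 := by
  rw [Finsupp.sum, Finset.sum_subset (Finset.subset_univ d.support)
    (by intro x _ hx; exact Finsupp.notMem_support_iff.mp hx)]
  exact Fin.sum_univ_two d

lemma fin2_ext {d e : Fin 2 →₀ ℕ} (h0 : d 0 = e 0) (h1 : d 1 = e 1) : d = e := by
  ext i
  fin_cases i
  · exact h0
  · exact h1

/-- structure of degree-1 homogeneous polynomials in two variables -/
lemma lin_form_eq {φ : RR} (h : φ.IsHomogeneous 1) :
    φ = C (φ.coeff (Finsupp.single 0 1)) * X 0 + C (φ.coeff (Finsupp.single 1 1)) * X 1 := by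
  ext d
  rw [coeff_add, coeff_C_mul, coeff_C_mul, coeff_X', coeff_X']
  by_cases hd : d.degree = 1
  · rw [deg2] at hd
    rcases Nat.eq_zero_or_pos (d 0) with h0 | h0
    · have hd1 : d = Finsupp.single 1 1 := by
        apply fin2_ext <;> simp [Finsupp.single_apply, h0] <;> omega
      rw [if_neg, if_pos hd1.symm]
      · simp [hd1]
      · intro hc
        have := congrArg (fun t : Fin 2 →₀ ℕ => t 0) (hc.trans hd1)
        simp [Finsupp.single_apply] at this
    · have hd1 : d = Finsupp.single 0 1 := by
        apply fin2_ext <;> simp [Finsupp.single_apply] <;> omega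
      rw [if_pos hd1.symm, if_neg]
      · simp [hd1]
      · intro hc
        have := congrArg (fun t : Fin 2 →₀ ℕ => t 1) (hc.trans hd1)
        simp [Finsupp.single_apply] at this
  · have : φ.coeff d = 0 := h.coeff_eq_zero hd
    rw [this]
    have i0 : ¬ d = Finsupp.single 0 1 := by rintro rfl; simp [deg2, Finsupp.single_apply] at hd
    have i1 : ¬ d = Finsupp.single 1 1 := by rintro rfl; simp [deg2, Finsupp.single_apply] at hd
    rw [if_neg (fun hc => i0 hc.symm), if_neg (fun hc => i1 hc.symm)]
    simp

/-- Euler's identity in two variables -/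
lemma euler {φ : RR} {n : ℕ} (h : φ.IsHomogeneous n) :
    (C (n : ℂ)) * φ = X 0 * pderiv 0 φ + X 1 * pderiv 1 φ := by
  have key : ∀ d : Fin 2 →₀ ℕ, ∀ c : ℂ, d.degree = n →
      (C (n : ℂ)) * monomial d c = X 0 * pderiv 0 (monomial d c) + X 1 * pderiv 1 (monomial d c) := by
    intro d c hd
    rw [pderiv_monomial, pderiv_monomial]
    have e0 : (X 0 : RR) * monomial (d - Finsupp.single 0 1) (c * (d 0 : ℂ))
        = monomial d ((d 0 : ℂ) * c) := by
      rcases Nat.eq_zero_or_pos (d 0) with h0 | h0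
      · simp [h0]
      · rw [X, monomial_mul]
        have hA : ((Finsupp.single 0 1 : Fin 2 →₀ ℕ) + (d - Finsupp.single 0 1)) = d := by
          apply fin2_ext <;> simp [Finsupp.single_apply] <;> omega
        rw [show ((fun₀ | (0:Fin 2) => 1) : Fin 2 →₀ ℕ) = Finsupp.single 0 1 from rfl, hA]
        congr 1; ring
    have e1 : (X 1 : RR) * monomial (d - Finsupp.single 1 1) (c * (d 1 : ℂ))
        = monomial d ((d 1 : ℂ) * c) := by
      rcases Nat.eq_zero_or_pos (d 1) with h0 | h0
      · simp [h0]
      · rw [X, monomial_mul]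
        have hA : ((Finsupp.single 1 1 : Fin 2 →₀ ℕ) + (d - Finsupp.single 1 1)) = d := by
          apply fin2_ext <;> simp [Finsupp.single_apply] <;> omega
        rw [show ((fun₀ | (1:Fin 2) => 1) : Fin 2 →₀ ℕ) = Finsupp.single 1 1 from rfl, hA]
        congr 1; ring
    rw [show ((fun₀ | (0:Fin 2) => 1) : Fin 2 →₀ ℕ) = Finsupp.single 0 1 from rfl] at *
    rw [e0, e1, C_mul_monomial, ← map_add (monomial d)]
    congr 1
    have : (n : ℂ) = ((d 0 : ℂ) + (d 1 : ℂ)) := by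
      rw [← Nat.cast_add, ← deg2 d, hd]
    rw [this]; ring
  -- decompose φ into monomials
  conv_lhs => rw [← support_sum_monomial_coeff φ]
  conv_rhs => rw [← support_sum_monomial_coeff φ]
  rw [Finset.mul_sum, map_sum (pderiv 0), map_sum (pderiv 1), Finset.mul_sum, Finset.mul_sum,
    ← Finset.sum_add_distrib]
  apply Finset.sum_congr rfl
  intro d hd
  exact key d _ (by rw [Finsupp.degree_eq_weight_one]; exact h (mem_support_iff.mp hd))

/-- pderiv of homogeneous is homogeneous -/
lemma pderiv_homog {φ : RR} {n : ℕ} (h : φ.IsHomogeneous n) (i : Fin 2) :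
    (pderiv i φ).IsHomogeneous (n - 1) := by
  conv_lhs => rw [← support_sum_monomial_coeff φ]
  rw [map_sum (pderiv i)]
  apply MvPolynomial.IsHomogeneous.sum
  intro d hd
  rw [pderiv_monomial]
  rcases Nat.eq_zero_or_pos (d i) with h0 | h0
  · simp [h0]
    exact isHomogeneous_zero _ _ _
  · apply isHomogeneous_monomial
    have hdn : d.degree = n := by
      rw [Finsupp.degree_eq_weight_one]; exact h (mem_support_iff.mp hd)
    rw [deg2]
    rw [deg2] at hdn
    have hi : i = 0 ∨ i = 1 := by omega
    rcases hi with rfl | rfl <;> simp [Finsupp.sub_apply, Finsupp.single_apply] <;> omega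

lemma sum_eq_degree (u : Fin 2 →₀ ℕ) : (u.sum fun _ e => e) = u.degree := by
  rw [sum2, deg2]

/-- homogeneous component of a product with a homogeneous polynomial, high degrees -/
lemma comp_mul_hi {h : RR} {d : ℕ} (hh : h.IsHomogeneous d) (a : RR) (k : ℕ) :
    homogeneousComponent (k + d) (a * h) = homogeneousComponent k a * h := by
  have main : ∀ u : Fin 2 →₀ ℕ, ∀ c : ℂ,
      homogeneousComponent (k + d) (monomial u c * h)
      = homogeneousComponent k (monomial u c) * h := by
    intro u c
    have hmon : (monomial u c).IsHomogeneous u.degree := isHomogeneous_monomial _ rfl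
    have hprod : ((monomial u c) * h).IsHomogeneous (u.degree + d) := hmon.mul hh
    rw [homogeneousComponent_of_mem ((mem_homogeneousSubmodule _ _).mpr hprod),
      homogeneousComponent_of_mem ((mem_homogeneousSubmodule _ _).mpr hmon)]
    by_cases hu : k = u.degree
    · rw [if_pos (by omega), if_pos hu]
    · rw [if_neg (by omega), if_neg hu, zero_mul]
  conv_lhs => rw [← support_sum_monomial_coeff a]
  conv_rhs => rw [← support_sum_monomial_coeff a]
  rw [Finset.sum_mul, map_sum, map_sum, Finset.sum_mul]
  exact Finset.sum_congr rfl (fun u _ => main u _)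

/-- homogeneous component of a product with a homogeneous polynomial, low degrees -/
lemma comp_mul_lo {h : RR} {d : ℕ} (hh : h.IsHomogeneous d) (a : RR) {k : ℕ} (hk : k < d) :
    homogeneousComponent k (a * h) = 0 := by
  conv_lhs => rw [← support_sum_monomial_coeff a]
  rw [Finset.sum_mul, map_sum]
  apply Finset.sum_eq_zero
  intro u _
  have hmon : (monomial u (coeff u a)).IsHomogeneous u.degree := isHomogeneous_monomial _ rfl
  have hprod : ((monomial u (coeff u a)) * h).IsHomogeneous (u.degree + d) := hmon.mul hh
  rw [homogeneousComponent_of_mem ((mem_homogeneousSubmodule _ _).mpr hprod),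
    if_neg (by omega)]

/-- the top homogeneous component of a nonzero polynomial is nonzero -/
lemma topcomp_ne {a : RR} (ha : a ≠ 0) : homogeneousComponent a.totalDegree a ≠ 0 := by
  have hsupp : a.support.Nonempty :=
    Finset.nonempty_iff_ne_empty.mpr (fun hc => ha (support_eq_empty.mp hc))
  obtain ⟨u, hu, hdeg⟩ := Finset.exists_mem_eq_sup a.support hsupp (fun s => s.sum fun _ e => e)
  have hdeg' : a.totalDegree = u.degree := by rw [← sum_eq_degree]; exact hdeg
  intro hc
  have h2 := coeff_homogeneousComponent (σ := Fin 2) (R := ℂ) a.totalDegree a u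
  rw [hc, if_pos hdeg'.symm, coeff_zero] at h2
  exact (mem_support_iff.mp hu) h2.symm

/-- totalDegree is additive on products over a domain -/
lemma totalDegree_mul_eq {a b : RR} (ha : a ≠ 0) (hb : b ≠ 0) :
    (a * b).totalDegree = a.totalDegree + b.totalDegree := by
  refine le_antisymm (totalDegree_mul a b) ?_
  obtain ⟨ta, hta⟩ : ∃ t, a.totalDegree = t := ⟨_, rfl⟩
  obtain ⟨tb, htb⟩ : ∃ t, b.totalDegree = t := ⟨_, rfl⟩
  have key : homogeneousComponent (ta + tb) (a * b)
      = homogeneousComponent ta a * homogeneousComponent tb b := by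
    conv_lhs => rw [← sum_homogeneousComponent a, ← sum_homogeneousComponent b, hta, htb]
    rw [Finset.sum_mul_sum, map_sum]
    rw [Finset.sum_congr rfl (fun j _ => map_sum (homogeneousComponent (ta+tb)) _ _)]
    have step : ∀ j ∈ Finset.range (ta + 1), ∀ l ∈ Finset.range (tb + 1),
        homogeneousComponent (ta + tb) (homogeneousComponent j a * homogeneousComponent l b)
        = if j = ta ∧ l = tb
          then homogeneousComponent j a * homogeneousComponent l b else 0 := by
      intro j hj l hl
      simp only [Finset.mem_range] at hj hl
      have hprod : (homogeneousComponent j a * homogeneousComponent l b).IsHomogeneous (j + l) :=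
        (homogeneousComponent_isHomogeneous j a).mul (homogeneousComponent_isHomogeneous l b)
      rw [homogeneousComponent_of_mem ((mem_homogeneousSubmodule _ _).mpr hprod)]
      by_cases hjl : j = ta ∧ l = tb
      · rw [if_pos (by omega), if_pos hjl]
      · rw [if_neg (by omega), if_neg hjl]
    rw [Finset.sum_congr rfl (fun j hj => Finset.sum_congr rfl (fun l hl => step j hj l hl))]
    rw [Finset.sum_eq_single ta]
    · rw [Finset.sum_eq_single tb]
      · rw [if_pos ⟨rfl, rfl⟩]
      · intro l _ hl; rw [if_neg (fun hc => hl hc.2)]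
      · intro hc; exact absurd (Finset.self_mem_range_succ tb) hc
    · intro j _ hj; apply Finset.sum_eq_zero; intro l _; rw [if_neg (fun hc => hj hc.1)]
    · intro hc; exact absurd (Finset.self_mem_range_succ ta) hc
  have hne : homogeneousComponent (ta + tb) (a * b) ≠ 0 := by
    rw [key]
    exact mul_ne_zero (hta ▸ topcomp_ne ha) (htb ▸ topcomp_ne hb)
  rw [hta, htb]
  by_contra hlt
  push_neg at hlt
  exact hne (homogeneousComponent_eq_zero _ _ hlt)

/-- equivalence for counting monomials of degree exactly n -/
def homogEquiv (n : ℕ) : {d : Fin 2 →₀ ℕ // d ∈ {d : Fin 2 →₀ ℕ | d.degree = n}} ≃ Fin (n+1) where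
  toFun d := ⟨d.1 0, by have := d.2; simp only [Set.mem_setOf_eq, deg2] at this; omega⟩
  invFun k := ⟨Finsupp.single 0 k.1 + Finsupp.single 1 (n - k.1), by
    simp only [Set.mem_setOf_eq, deg2, Finsupp.add_apply, Finsupp.single_apply]
    simp
    omega⟩
  left_inv d := by
    apply Subtype.ext
    have hd := d.2
    simp only [Set.mem_setOf_eq, deg2] at hd
    apply fin2_ext <;> simp [Finsupp.single_apply] <;> omega
  right_inv k := by
    apply Fin.ext
    simp [Finsupp.single_apply]

lemma finrank_homog (n : ℕ) :
    Module.finrank ℂ (homogeneousSubmodule (Fin 2) ℂ n) = n + 1 := by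
  rw [homogeneousSubmodule_eq_finsupp_supported]
  have b := basisRestrictSupport ℂ {d : Fin 2 →₀ ℕ | d.degree = n}
  haveI : Fintype {d : Fin 2 →₀ ℕ // d ∈ {d : Fin 2 →₀ ℕ | d.degree = n}} :=
    Fintype.ofEquiv _ (homogEquiv n).symm
  rw [show (AddMonoidAlgebra.supported ℂ ℂ {d : Fin 2 →₀ ℕ | d.degree = n} :
      Submodule ℂ (MvPolynomial (Fin 2) ℂ)) = restrictSupport ℂ {d : Fin 2 →₀ ℕ | d.degree = n}
      from rfl]
  rw [Module.finrank_eq_card_basis b, Fintype.card_congr (homogEquiv n), Fintype.card_fin]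

/-- equivalence for counting monomials of degree at most M -/
def rtdEquiv (M : ℕ) : {d : Fin 2 →₀ ℕ // d ∈ {d : Fin 2 →₀ ℕ | (d.sum fun _ e => e) ≤ M}} ≃
    {p : Fin (M+1) × Fin (M+1) // p.1.1 + p.2.1 ≤ M} where
  toFun d := ⟨(⟨d.1 0, by have := d.2; simp only [Set.mem_setOf_eq, sum2] at this; omega⟩,
               ⟨d.1 1, by have := d.2; simp only [Set.mem_setOf_eq, sum2] at this; omega⟩), by
    have := d.2; simp only [Set.mem_setOf_eq, sum2] at this; simpa using this⟩
  invFun p := ⟨Finsupp.single 0 p.1.1.1 + Finsupp.single 1 p.1.2.1, by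
    have := p.2
    simp only [Set.mem_setOf_eq, sum2, Finsupp.add_apply, Finsupp.single_apply]
    simp
    omega⟩
  left_inv d := by
    apply Subtype.ext
    apply fin2_ext <;> simp [Finsupp.single_apply]
  right_inv p := by
    apply Subtype.ext
    apply Prod.ext <;> apply Fin.ext <;> simp [Finsupp.single_apply]

lemma finrank_rtd (M : ℕ) :
    Module.finrank ℂ (restrictTotalDegree (Fin 2) ℂ M) =
      Fintype.card {p : Fin (M+1) × Fin (M+1) // p.1.1 + p.2.1 ≤ M} := by
  have b := basisRestrictSupport ℂ {d : Fin 2 →₀ ℕ | (d.sum fun _ e => e) ≤ M}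
  haveI : Fintype {d : Fin 2 →₀ ℕ // d ∈ {d : Fin 2 →₀ ℕ | (d.sum fun _ e => e) ≤ M}} :=
    Fintype.ofEquiv _ (rtdEquiv M).symm
  rw [show restrictTotalDegree (Fin 2) ℂ M
      = restrictSupport ℂ {d : Fin 2 →₀ ℕ | (d.sum fun _ e => e) ≤ M} from rfl]
  rw [Module.finrank_eq_card_basis b, Fintype.card_congr (rtdEquiv M)]

section Steps

variable {g h : RR} {d : ℕ}

lemma lowComp (hg : g.IsHomogeneous d) (hh : h.IsHomogeneous d) {p : RR}
    (hp : p ∈ Ideal.span {g, h}) {k : ℕ} (hk : k < d) : homogeneousComponent k p = 0 := by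
  obtain ⟨a, b, hab⟩ := Ideal.mem_span_pair.mp hp
  rw [← hab, map_add, comp_mul_lo hg a hk, comp_mul_lo hh b hk, add_zero]

/-- every sufficiently high degree homogeneous polynomial is in the ideal,
given the base degree `2d-1` -/
lemma stepA (hbase : ∀ p : RR, p.IsHomogeneous (2*d-1) → p ∈ Ideal.span {g,h}) :
    ∀ k, 2*d-1 ≤ k → ∀ p : RR, p.IsHomogeneous k → p ∈ Ideal.span {g,h} := by
  intro k hk
  induction k, hk using Nat.le_induction with
  | base => exact hbase
  | succ k hk ih =>
    intro p hp
    rw [← support_sum_monomial_coeff p]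
    apply Ideal.sum_mem
    intro u hu
    have hud : u.degree = k + 1 := by
      rw [Finsupp.degree_eq_weight_one]; exact hp (mem_support_iff.mp hu)
    have hpos : 0 < u 0 ∨ 0 < u 1 := by
      rw [deg2] at hud
      by_contra hc
      push_neg at hc
      omega
    rcases hpos with h0 | h0
    · have : monomial u (coeff u p) = X 0 * monomial (u - Finsupp.single 0 1) (coeff u p) := by
        rw [X, monomial_mul, one_mul]
        have hA : ((Finsupp.single 0 1 : Fin 2 →₀ ℕ) + (u - Finsupp.single 0 1)) = u := by
          apply fin2_ext <;> simp [Finsupp.single_apply] <;> omega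
        rw [show ((fun₀ | (0:Fin 2) => 1) : Fin 2 →₀ ℕ) = Finsupp.single 0 1 from rfl, hA]
      rw [this]
      exact Ideal.mul_mem_left _ _ (ih (monomial _ _) (isHomogeneous_monomial _
        (by rw [deg2] at hud ⊢; simp [Finsupp.sub_apply, Finsupp.single_apply]; omega)))
    · have : monomial u (coeff u p) = X 1 * monomial (u - Finsupp.single 1 1) (coeff u p) := by
        rw [X, monomial_mul, one_mul]
        have hA : ((Finsupp.single 1 1 : Fin 2 →₀ ℕ) + (u - Finsupp.single 1 1)) = u := by
          apply fin2_ext <;> simp [Finsupp.single_apply] <;> omega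
        rw [show ((fun₀ | (1:Fin 2) => 1) : Fin 2 →₀ ℕ) = Finsupp.single 1 1 from rfl, hA]
      rw [this]
      exact Ideal.mul_mem_left _ _ (ih (monomial _ _) (isHomogeneous_monomial _
        (by rw [deg2] at hud ⊢; simp [Finsupp.sub_apply, Finsupp.single_apply]; omega)))

/-- decomposition of a polynomial into components up to degree `n` -/
lemma decomp_le (p : RR) {n : ℕ} (hn : p.totalDegree ≤ n) :
    p = ∑ k ∈ Finset.range (n+1), homogeneousComponent k p := by
  have hsub : Finset.range (p.totalDegree + 1) ⊆ Finset.range (n+1) :=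
    Finset.range_subset_range.mpr (by omega)
  have hz : ∀ k ∈ Finset.range (n+1), k ∉ Finset.range (p.totalDegree + 1) →
      homogeneousComponent k p = 0 := by
    intro k _ hk
    simp only [Finset.mem_range, not_lt] at hk
    exact homogeneousComponent_eq_zero _ _ (by omega)
  rw [← Finset.sum_subset hsub hz]
  exact (sum_homogeneousComponent p).symm

/-- degree bound for sums of low components -/
lemma sum_comp_totalDegree_le (p : RR) (n : ℕ) :
    (∑ k ∈ Finset.range n, homogeneousComponent k p).totalDegree ≤ n - 1 := by
  refine (totalDegree_finset_sum _ _).trans (Finset.sup_le ?_)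
  intro k hk
  simp only [Finset.mem_range] at hk
  exact (homogeneousComponent_isHomogeneous k p).totalDegree_le.trans (by omega)

/-- surjectivity: every polynomial is congruent mod the ideal to one of degree ≤ 2d-2 -/
lemma stepB (hd : 1 ≤ d)
    (hbase : ∀ p : RR, p.IsHomogeneous (2*d-1) → p ∈ Ideal.span {g,h}) (p : RR) :
    ∃ q ∈ restrictTotalDegree (Fin 2) ℂ (2*d-2), p - q ∈ Ideal.span {g,h} := by
  obtain ⟨n, hn1, hn2⟩ : ∃ n, p.totalDegree ≤ n ∧ 2*d-2 ≤ n :=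
    ⟨max _ _, le_max_left _ _, le_max_right _ _⟩
  refine ⟨∑ k ∈ Finset.range (2*d-1), homogeneousComponent k p, ?_, ?_⟩
  · rw [mem_restrictTotalDegree]
    exact (sum_comp_totalDegree_le p (2*d-1)).trans (by omega)
  · have hp : p = ∑ k ∈ Finset.range (n+1), homogeneousComponent k p := decomp_le p hn1
    have hsplit' : (∑ k ∈ Finset.range (n+1), homogeneousComponent k p)
        = (∑ k ∈ Finset.range (2*d-1), homogeneousComponent k p)
          + ∑ k ∈ Finset.Ico (2*d-1) (n+1), homogeneousComponent k p := by
      simp only [Finset.range_eq_Ico]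
      exact (Finset.sum_Ico_consecutive _ (Nat.zero_le _) (by omega)).symm
    have hsplit := hp.trans hsplit' 
    rw [sub_eq_iff_eq_add'.mpr hsplit]
    apply Ideal.sum_mem
    intro k hk
    simp only [Finset.mem_Ico] at hk
    exact stepA hbase k hk.1 _ (homogeneousComponent_isHomogeneous k p)

/-- kernel: elements of the ideal of degree ≤ 2d-2 decompose with low-degree cofactors -/
lemma stepC (hd : 1 ≤ d) (hg : g.IsHomogeneous d) (hh : h.IsHomogeneous d) {p : RR}
    (hp : p ∈ Ideal.span {g, h}) (hdeg : p.totalDegree ≤ 2*d-2) :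
    ∃ a' ∈ restrictTotalDegree (Fin 2) ℂ (d-2), ∃ b' ∈ restrictTotalDegree (Fin 2) ℂ (d-2),
      p = a' * g + b' * h ∧ (d = 1 → p = 0) := by
  obtain ⟨a, b, hab⟩ := Ideal.mem_span_pair.mp hp
  have h21 : 2*d-2+1 = 2*d-1 := by omega
  have hps : p = ∑ k ∈ Finset.range (2*d-1), homogeneousComponent k p :=
    (decomp_le p hdeg).trans (by rw [h21])
  have key : ∀ c G : RR, G.IsHomogeneous d →
      ∑ k ∈ Finset.range (2*d-1), homogeneousComponent k (c * G)
      = (∑ j ∈ Finset.range (d-1), homogeneousComponent j c) * G := by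
    intro c g hg
    have hsplit : Finset.range (2*d-1) = Finset.Ico 0 d ∪ Finset.Ico d (2*d-1) := by
      rw [Finset.range_eq_Ico, ← Finset.Ico_union_Ico_eq_Ico (Nat.zero_le d) (by omega)]
    rw [hsplit, Finset.sum_union (by
      apply Finset.Ico_disjoint_Ico_consecutive)]
    have h1 : ∑ k ∈ Finset.Ico 0 d, homogeneousComponent k (c * g) = 0 := by
      apply Finset.sum_eq_zero
      intro k hk
      simp only [Finset.mem_Ico] at hk
      exact comp_mul_lo hg c hk.2
    have h2 : ∑ k ∈ Finset.Ico d (2*d-1), homogeneousComponent k (c * g)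
        = ∑ j ∈ Finset.range (d-1), homogeneousComponent j c * g := by
      rw [Finset.sum_Ico_eq_sum_range]
      apply Finset.sum_congr (by congr 1; omega)
      intro j _
      rw [add_comm d j, comp_mul_hi hg c j]
    rw [h1, h2, zero_add, Finset.sum_mul]
  have habg : p = (∑ j ∈ Finset.range (d-1), homogeneousComponent j a) * g
      + (∑ j ∈ Finset.range (d-1), homogeneousComponent j b) * h := by
    conv_lhs => rw [hps]
    have : ∀ k, homogeneousComponent k p
        = homogeneousComponent k (a * g) + homogeneousComponent k (b * h) := by
      intro k; rw [← map_add, hab]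
    rw [Finset.sum_congr rfl (fun k _ => this k), Finset.sum_add_distrib,
      key a g hg, key b h hh]
  refine ⟨_, ?_, _, ?_, habg, ?_⟩
  · rw [mem_restrictTotalDegree]
    exact (sum_comp_totalDegree_le a (d-1)).trans (by omega)
  · rw [mem_restrictTotalDegree]
    exact (sum_comp_totalDegree_le b (d-1)).trans (by omega)
  · intro hd1
    rw [habg]
    subst hd1
    norm_num

lemma fd_homog (n : ℕ) : FiniteDimensional ℂ (homogeneousSubmodule (Fin 2) ℂ n) := by
  apply Submodule.finiteDimensional_of_le (S₂ := restrictTotalDegree (Fin 2) ℂ n)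
  intro p hp
  rw [mem_restrictTotalDegree]
  exact ((mem_homogeneousSubmodule _ _).mp hp).totalDegree_le

lemma directzero (hh : h.IsHomogeneous d) (hh0 : h ≠ 0)
    (hdvd : ∀ a b : RR, a * g = b * h → h ∣ a) {a b : RR}
    (hab : a * g = b * h) (hdeg : a.totalDegree < d) : a = 0 := by
  by_contra ha
  obtain ⟨c, hc⟩ := hdvd a b hab
  have hc0 : c ≠ 0 := by rintro rfl; rw [mul_zero] at hc; exact ha hc
  have htd := totalDegree_mul_eq hh0 hc0
  rw [← hc, hh.totalDegree hh0] at htd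
  omega

lemma baseLemma (hd : 1 ≤ d) (hg : g.IsHomogeneous d) (hh : h.IsHomogeneous d)
    (hg0 : g ≠ 0) (hh0 : h ≠ 0)
    (hdvd : ∀ a b : RR, a * g = b * h → h ∣ a) :
    ∀ p : RR, p.IsHomogeneous (2*d-1) → p ∈ Ideal.span {g,h} := by
  have injg : Function.Injective (LinearMap.mulLeft ℂ g) := by
    intro x y hxy
    simp only [LinearMap.mulLeft_apply] at hxy
    exact mul_left_cancel₀ hg0 hxy
  have injh : Function.Injective (LinearMap.mulLeft ℂ h) := by
    intro x y hxy
    simp only [LinearMap.mulLeft_apply] at hxy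
    exact mul_left_cancel₀ hh0 hxy
  set S := homogeneousSubmodule (Fin 2) ℂ (2*d-1) with hS
  set Sd := homogeneousSubmodule (Fin 2) ℂ (d-1) with hSd
  set A := Submodule.map (LinearMap.mulLeft ℂ g) Sd with hA
  set B := Submodule.map (LinearMap.mulLeft ℂ h) Sd with hB
  haveI : FiniteDimensional ℂ Sd := fd_homog _
  haveI : FiniteDimensional ℂ S := fd_homog _
  have eA := Submodule.equivMapOfInjective (LinearMap.mulLeft ℂ g) injg Sd
  have eB := Submodule.equivMapOfInjective (LinearMap.mulLeft ℂ h) injh Sd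
  haveI : FiniteDimensional ℂ A := Module.Finite.equiv eA
  haveI : FiniteDimensional ℂ B := Module.Finite.equiv eB
  have hAS : A ≤ S := by
    rintro x ⟨a, ha, rfl⟩
    simp only [LinearMap.mulLeft_apply]
    rw [hS, mem_homogeneousSubmodule, show 2*d-1 = d + (d-1) from by omega]
    exact hg.mul ((mem_homogeneousSubmodule _ _).mp ha)
  have hBS : B ≤ S := by
    rintro x ⟨a, ha, rfl⟩
    simp only [LinearMap.mulLeft_apply]
    rw [hS, mem_homogeneousSubmodule, show 2*d-1 = d + (d-1) from by omega]
    exact hh.mul ((mem_homogeneousSubmodule _ _).mp ha)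
  have hAB : A ⊓ B = ⊥ := by
    rw [Submodule.eq_bot_iff]
    rintro x ⟨hxA, hxB⟩
    obtain ⟨a, ha, rfl⟩ := hxA
    obtain ⟨b, hb, hba⟩ := hxB
    simp only [LinearMap.mulLeft_apply] at hba ⊢
    have hab : a * g = b * h := by rw [mul_comm a g, mul_comm b h, hba]
    have ha0 : a = 0 := by
      apply directzero hh hh0 hdvd hab
      have := ((mem_homogeneousSubmodule _ _).mp ha).totalDegree_le
      omega
    rw [ha0, mul_zero]
  have hfrA : Module.finrank ℂ A = d := by
    rw [← LinearEquiv.finrank_eq eA, hSd, finrank_homog]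
    omega
  have hfrB : Module.finrank ℂ B = d := by
    rw [← LinearEquiv.finrank_eq eB, hSd, finrank_homog]
    omega
  have hsup := Submodule.finrank_sup_add_finrank_inf_eq A B
  rw [hAB, finrank_bot, add_zero, hfrA, hfrB] at hsup
  have hfrS : Module.finrank ℂ S = 2*d := by
    rw [hS, finrank_homog]
    omega
  have heq : A ⊔ B = S := by
    apply Submodule.eq_of_le_of_finrank_le (sup_le hAS hBS)
    rw [hfrS, hsup]
    omega
  intro p hp
  have hpS : p ∈ A ⊔ B := by
    rw [heq]
    exact (mem_homogeneousSubmodule _ _).mpr hp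
  obtain ⟨x, hx, y, hy, rfl⟩ := Submodule.mem_sup.mp hpS
  obtain ⟨a, _, rfl⟩ := hx
  obtain ⟨b, _, rfl⟩ := hy
  simp only [LinearMap.mulLeft_apply]
  exact Ideal.add_mem _
    (Ideal.mul_mem_right _ _ (Ideal.subset_span (Set.mem_insert _ _)))
    (Ideal.mul_mem_right _ _ (Ideal.subset_span (Set.mem_insert_of_mem _ rfl)))

set_option synthInstance.maxHeartbeats 1000000 in
set_option maxHeartbeats 1000000 in
/-- common part: the quotient is the quotient of `P` by the kernel -/
lemma quotSetup (hd : 1 ≤ d) (hg : g.IsHomogeneous d) (hh : h.IsHomogeneous d)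
    (hg0 : g ≠ 0) (hh0 : h ≠ 0)
    (hdvd : ∀ a b : RR, a * g = b * h → h ∣ a) :
    Module.finrank ℂ (RR ⧸ Ideal.span {g,h})
      + Module.finrank ℂ ↥(Submodule.restrictScalars ℂ (Ideal.span {g,h})
          ⊓ restrictTotalDegree (Fin 2) ℂ (2*d-2))
      = Module.finrank ℂ (restrictTotalDegree (Fin 2) ℂ (2*d-2)) := by
  set I := Ideal.span {g,h} with hI
  set P := restrictTotalDegree (Fin 2) ℂ (2*d-2) with hP
  set ψ : P →ₗ[ℂ] RR ⧸ I := ((Ideal.Quotient.mkₐ ℂ I).toLinearMap).comp P.subtype with hψ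
  have hbase := baseLemma hd hg hh hg0 hh0 hdvd
  have surjψ : Function.Surjective ψ := by
    intro z
    obtain ⟨p, rfl⟩ := Ideal.Quotient.mk_surjective z
    obtain ⟨q, hq, hpq⟩ := stepB hd hbase p
    refine ⟨⟨q, hq⟩, ?_⟩
    have : ψ ⟨q, hq⟩ = Ideal.Quotient.mk I q := by
      simp [hψ, Ideal.Quotient.mkₐ_eq_mk]
    rw [this, Ideal.Quotient.mk_eq_mk_iff_sub_mem]
    simpa using I.neg_mem hpq
  have e := LinearMap.quotKerEquivOfSurjective ψ surjψ
  have hrank := Submodule.finrank_quotient_add_finrank (LinearMap.ker ψ)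
  rw [LinearEquiv.finrank_eq e] at hrank
  have hker : LinearMap.ker ψ
      = Submodule.comap P.subtype ((Submodule.restrictScalars ℂ I) ⊓ P) := by
    ext x
    simp only [LinearMap.mem_ker, Submodule.mem_comap, Submodule.mem_inf,
      Submodule.restrictScalars_mem]
    constructor
    · intro hx
      refine ⟨?_, x.2⟩
      rwa [hψ, LinearMap.comp_apply, AlgHom.toLinearMap_apply, Ideal.Quotient.mkₐ_eq_mk,
        Ideal.Quotient.eq_zero_iff_mem] at hx
    · intro hx
      rw [hψ, LinearMap.comp_apply, AlgHom.toLinearMap_apply, Ideal.Quotient.mkₐ_eq_mk,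
        Ideal.Quotient.eq_zero_iff_mem]
      exact hx.1
  have eK := Submodule.comapSubtypeEquivOfLe
    (inf_le_right : (Submodule.restrictScalars ℂ I) ⊓ P ≤ P)
  have h1 : Module.finrank ℂ (LinearMap.ker ψ)
      = Module.finrank ℂ ↥((Submodule.restrictScalars ℂ I) ⊓ P) := by
    rw [hker]
    exact LinearEquiv.finrank_eq eK
  omega

/-- the dimension count for `d ≥ 2` -/
lemma mainDim (hd : 2 ≤ d) (hg : g.IsHomogeneous d) (hh : h.IsHomogeneous d)
    (hg0 : g ≠ 0) (hh0 : h ≠ 0)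
    (hdvd : ∀ a b : RR, a * g = b * h → h ∣ a) :
    Module.finrank ℂ (RR ⧸ Ideal.span {g,h})
      + 2 * Module.finrank ℂ (restrictTotalDegree (Fin 2) ℂ (d-2))
      = Module.finrank ℂ (restrictTotalDegree (Fin 2) ℂ (2*d-2)) := by
  have hq := quotSetup (by omega) hg hh hg0 hh0 hdvd
  set I := Ideal.span {g,h} with hI
  set P := restrictTotalDegree (Fin 2) ℂ (2*d-2) with hP
  set P' := restrictTotalDegree (Fin 2) ℂ (d-2) with hP'
  set A := Submodule.map (LinearMap.mulLeft ℂ g) P' with hA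
  set B := Submodule.map (LinearMap.mulLeft ℂ h) P' with hB
  have injg : Function.Injective (LinearMap.mulLeft ℂ g) := by
    intro x y hxy
    simp only [LinearMap.mulLeft_apply] at hxy
    exact mul_left_cancel₀ hg0 hxy
  have injh : Function.Injective (LinearMap.mulLeft ℂ h) := by
    intro x y hxy
    simp only [LinearMap.mulLeft_apply] at hxy
    exact mul_left_cancel₀ hh0 hxy
  have eA := Submodule.equivMapOfInjective (LinearMap.mulLeft ℂ g) injg P'
  have eB := Submodule.equivMapOfInjective (LinearMap.mulLeft ℂ h) injh P'
  haveI : FiniteDimensional ℂ A := Module.Finite.equiv eA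
  haveI : FiniteDimensional ℂ B := Module.Finite.equiv eB
  have hJ : (Submodule.restrictScalars ℂ I) ⊓ P = A ⊔ B := by
    apply le_antisymm
    · rintro x ⟨hxI, hxP⟩
      obtain ⟨a', ha', b', hb', hx, -⟩ := stepC (by omega) hg hh hxI
        ((mem_restrictTotalDegree _ _ _).mp hxP)
      apply Submodule.mem_sup.mpr
      refine ⟨g * a', ⟨a', ha', by simp [LinearMap.mulLeft_apply]⟩,
        h * b', ⟨b', hb', by simp [LinearMap.mulLeft_apply]⟩, ?_⟩
      rw [hx]; ring
    · apply sup_le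
      · rintro x ⟨a, ha, rfl⟩
        simp only [LinearMap.mulLeft_apply]
        refine Submodule.mem_inf.mpr ⟨?_, ?_⟩
        · exact Ideal.mul_mem_right _ _ (Ideal.subset_span (Set.mem_insert _ _))
        · show g * a ∈ restrictTotalDegree (Fin 2) ℂ (2*d-2)
          rw [mem_restrictTotalDegree]
          refine (totalDegree_mul g a).trans ?_
          have h1 := hg.totalDegree_le
          have h2 : a ∈ restrictTotalDegree (Fin 2) ℂ (d-2) := ha
          rw [mem_restrictTotalDegree] at h2
          omega
      · rintro x ⟨a, ha, rfl⟩
        simp only [LinearMap.mulLeft_apply]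
        refine Submodule.mem_inf.mpr ⟨?_, ?_⟩
        · exact Ideal.mul_mem_right _ _ (Ideal.subset_span (Set.mem_insert_of_mem _ rfl))
        · show h * a ∈ restrictTotalDegree (Fin 2) ℂ (2*d-2)
          rw [mem_restrictTotalDegree]
          refine (totalDegree_mul h a).trans ?_
          have h1 := hh.totalDegree_le
          have h2 : a ∈ restrictTotalDegree (Fin 2) ℂ (d-2) := ha
          rw [mem_restrictTotalDegree] at h2
          omega
  have hAB : A ⊓ B = ⊥ := by
    rw [Submodule.eq_bot_iff]
    rintro x ⟨hxA, hxB⟩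
    obtain ⟨a, ha, rfl⟩ := hxA
    obtain ⟨b, hb, hba⟩ := hxB
    simp only [LinearMap.mulLeft_apply] at hba ⊢
    have hab : a * g = b * h := by rw [mul_comm a g, mul_comm b h, hba]
    have ha0 : a = 0 := by
      apply directzero hh hh0 hdvd hab
      have := (mem_restrictTotalDegree _ _ _).mp ha
      omega
    rw [ha0, mul_zero]
  have hfrA : Module.finrank ℂ A = Module.finrank ℂ P' := (LinearEquiv.finrank_eq eA).symm
  have hfrB : Module.finrank ℂ B = Module.finrank ℂ P' := (LinearEquiv.finrank_eq eB).symm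
  have hsup := Submodule.finrank_sup_add_finrank_inf_eq A B
  rw [hAB, finrank_bot, add_zero, hfrA, hfrB] at hsup
  rw [hJ, hsup] at hq
  omega

/-- the dimension count for `d = 1` -/
lemma mainDim1 (hg : g.IsHomogeneous 1) (hh : h.IsHomogeneous 1)
    (hg0 : g ≠ 0) (hh0 : h ≠ 0)
    (hdvd : ∀ a b : RR, a * g = b * h → h ∣ a) :
    Module.finrank ℂ (RR ⧸ Ideal.span {g,h})
      = Module.finrank ℂ (restrictTotalDegree (Fin 2) ℂ 0) := by
  have hq := quotSetup (d := 1) le_rfl hg hh hg0 hh0 hdvd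
  have hJ : (Submodule.restrictScalars ℂ (Ideal.span {g,h}))
      ⊓ restrictTotalDegree (Fin 2) ℂ (2*1-2) = ⊥ := by
    rw [Submodule.eq_bot_iff]
    rintro x ⟨hxI, hxP⟩
    obtain ⟨a', -, b', -, -, h1⟩ := stepC le_rfl hg hh hxI
      ((mem_restrictTotalDegree _ _ _).mp hxP)
    exact h1 rfl
  rw [hJ] at hq
  simpa using hq

lemma eqC_of_totalDegree_zero {p : RR} (hp : p.totalDegree = 0) : p = C (coeff 0 p) := by
  ext u
  by_cases hu : u = 0
  · subst hu; simp
  · rw [coeff_C, if_neg (fun hc => hu hc.symm)]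
    by_contra hc
    have hus : u ∈ p.support := mem_support_iff.mpr hc
    have h1 := le_totalDegree hus
    rw [hp, Nat.le_zero] at h1
    rw [sum2] at h1
    apply hu
    have hu0 : u 0 = 0 ∧ u 1 = 0 := by omega
    apply fin2_ext <;> simp [hu0.1, hu0.2]

end Steps

end

end OrdSingAux

open OrdSingAux in
set_option maxHeartbeats 2000000 in
/-- For an ordinary plane curve singularity of multiplicity `m < 5` (local normal form:
a product of `m` pairwise non-proportional linear forms), the Tjurina number equals the
Milnor number and both are `(m-1)²`. -/
theorem ordinary_tjurina_eq_milnor (m : ℕ) (hm2 : 2 ≤ m) (hm5 : m < 5)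
    (ℓ : Fin m → MvPolynomial (Fin 2) ℂ)
    (hhom : ∀ i, (ℓ i).IsHomogeneous 1)
    (hne : ∀ i, ℓ i ≠ 0)
    (hprop : ∀ i j, i ≠ j → ∀ c : ℂ, ℓ i ≠ c • ℓ j)
    (f : MvPolynomial (Fin 2) ℂ) (hf : f = ∏ i, ℓ i) :
    Module.finrank ℂ (MvPolynomial (Fin 2) ℂ ⧸
        Ideal.span {pderiv 0 f, pderiv 1 f}) = (m - 1) ^ 2 ∧
    Module.finrank ℂ (MvPolynomial (Fin 2) ℂ ⧸
        Ideal.span {f, pderiv 0 f, pderiv 1 f}) = (m - 1) ^ 2 := by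
  classical
  set g := pderiv (0 : Fin 2) f with hgdef
  set h := pderiv (1 : Fin 2) f with hhdef
  set a : Fin m → ℂ := fun i => coeff (Finsupp.single 0 1) (ℓ i) with hadef
  set b : Fin m → ℂ := fun i => coeff (Finsupp.single 1 1) (ℓ i) with hbdef
  have hm0 : (m : ℂ) ≠ 0 := Nat.cast_ne_zero.mpr (by omega)
  have hℓ : ∀ i, ℓ i = C (a i) * X 0 + C (b i) * X 1 := fun i => lin_form_eq (hhom i)
  have hab : ∀ i, ¬(a i = 0 ∧ b i = 0) := by
    rintro i ⟨ha0, hb0⟩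
    apply hne i
    rw [hℓ i, ha0, hb0]
    simp
  have heval : ∀ i (v : Fin 2 → ℂ), eval v (ℓ i) = a i * v 0 + b i * v 1 := by
    intro i v
    rw [hℓ i]
    simp
  have hp0 : ∀ i, pderiv (0 : Fin 2) (ℓ i) = C (a i) := by
    intro i
    rw [hℓ i]
    simp [pderiv_mul, pderiv_X, Pi.single_apply]
  have hp1 : ∀ i, pderiv (1 : Fin 2) (ℓ i) = C (b i) := by
    intro i
    rw [hℓ i]
    simp [pderiv_mul, pderiv_X, Pi.single_apply]
  have no2 : ∀ i j, i ≠ j → ∀ v : Fin 2 → ℂ, ¬(v 0 = 0 ∧ v 1 = 0) →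
      eval v (ℓ i) = 0 → eval v (ℓ j) = 0 → False := by
    intro i j hij v hv hvi hvj
    rw [heval] at hvi hvj
    have hdet : a i * b j - b i * a j = 0 := by
      rcases not_and_or.mp hv with h0 | h1
      · have h1' : (a i * b j - b i * a j) * v 0 = 0 := by
          linear_combination b j * hvi - b i * hvj
        exact (mul_eq_zero.mp h1').resolve_right h0
      · have h1' : (a i * b j - b i * a j) * v 1 = 0 := by
          linear_combination a i * hvj - a j * hvi
        exact (mul_eq_zero.mp h1').resolve_right h1
    by_cases haj : a j = 0
    · have hbj : b j ≠ 0 := fun hc => hab j ⟨haj, hc⟩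
      have hai : a i = 0 := by
        have h2 : a i * b j = 0 := by linear_combination hdet + b i * haj
        exact (mul_eq_zero.mp h2).resolve_right hbj
      apply hprop i j hij (b i / b j)
      rw [hℓ i, hℓ j, hai, haj]
      rw [smul_add, ← smul_mul_assoc, ← smul_mul_assoc, smul_eq_C_mul, smul_eq_C_mul,
        ← C_mul, ← C_mul, div_mul_cancel₀ _ hbj, mul_zero]
    · apply hprop i j hij (a i / a j)
      have e1 : a i / a j * a j = a i := div_mul_cancel₀ _ haj
      have e2 : a i / a j * b j = b i := by
        field_simp
        linear_combination hdet
      rw [hℓ i, hℓ j]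
      rw [smul_add, ← smul_mul_assoc, ← smul_mul_assoc, smul_eq_C_mul, smul_eq_C_mul,
        ← C_mul, ← C_mul, e1, e2]
  set w : Fin m → (Fin 2 → ℂ) := fun i => ![-(b i), a i] with hwdef
  have hw0 : ∀ i, ¬(w i 0 = 0 ∧ w i 1 = 0) := by
    intro i hc
    apply hab i
    simp only [hwdef, Matrix.cons_val_zero, Matrix.cons_val_one, Matrix.head_cons, neg_eq_zero]
      at hc
    exact ⟨hc.2, hc.1⟩
  have hwroot : ∀ i, eval (w i) (ℓ i) = 0 := by
    intro i
    rw [heval]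
    simp [hwdef]
    ring
  have hQne : ∀ i, eval (w i) (∏ j ∈ Finset.univ.erase i, ℓ j) ≠ 0 := by
    intro i
    rw [map_prod]
    rw [Finset.prod_ne_zero_iff]
    intro j hj
    exact fun hc => no2 j i (Finset.mem_erase.mp hj).1 (w i) (hw0 i) hc (hwroot i)
  have hfh : f.IsHomogeneous m := by
    rw [hf]
    have := MvPolynomial.IsHomogeneous.prod Finset.univ ℓ (fun _ => 1) (fun i _ => hhom i)
    simpa using this
  have hgh : g.IsHomogeneous (m-1) := pderiv_homog hfh 0
  have hhh : h.IsHomogeneous (m-1) := pderiv_homog hfh 1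
  have heuler : C (m : ℂ) * f = X 0 * g + X 1 * h := euler hfh
  have hfact : ∀ i, f = ℓ i * ∏ j ∈ Finset.univ.erase i, ℓ j := fun i => by
    rw [hf]; exact (Finset.mul_prod_erase _ _ (Finset.mem_univ i)).symm
  have hgeval : ∀ (v : Fin 2 → ℂ) i, eval v (ℓ i) = 0 →
      eval v g = a i * eval v (∏ j ∈ Finset.univ.erase i, ℓ j)
      ∧ eval v h = b i * eval v (∏ j ∈ Finset.univ.erase i, ℓ j) := by
    intro v i hroot
    constructor
    · rw [hgdef, hfact i, pderiv_mul, map_add, map_mul, map_mul, hp0 i, eval_C, hroot,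
        zero_mul, add_zero]
    · rw [hhdef, hfact i, pderiv_mul, map_add, map_mul, map_mul, hp1 i, eval_C, hroot,
        zero_mul, add_zero]
  have hg0 : g ≠ 0 := by
    intro hgz
    have hA : ∀ i, a i = 0 := by
      intro i
      have := (hgeval (w i) i (hwroot i)).1
      rw [hgz, map_zero] at this
      exact ((mul_eq_zero.mp this.symm).resolve_right (hQne i))
    have i0 : Fin m := ⟨0, by omega⟩
    exact hab ⟨0, by omega⟩ ⟨hA _, by
      by_contra hb0
      have hb1 : b (⟨1, by omega⟩ : Fin m) ≠ 0 := fun hc => hab _ ⟨hA _, hc⟩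
      apply hprop (⟨0, by omega⟩ : Fin m) (⟨1, by omega⟩ : Fin m)
        (by intro hc; exact absurd (congrArg Fin.val hc) (by norm_num))
        (b ⟨0, by omega⟩ / b ⟨1, by omega⟩)
      rw [hℓ, hℓ, hA _, hA _]
      rw [smul_add, ← smul_mul_assoc, ← smul_mul_assoc, smul_eq_C_mul, smul_eq_C_mul,
        ← C_mul, ← C_mul, div_mul_cancel₀ _ hb1, mul_zero]⟩
  have hh0 : h ≠ 0 := by
    intro hhz
    have hB : ∀ i, b i = 0 := by
      intro i
      have := (hgeval (w i) i (hwroot i)).2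
      rw [hhz, map_zero] at this
      exact ((mul_eq_zero.mp this.symm).resolve_right (hQne i))
    exact hab ⟨0, by omega⟩ ⟨by
      by_contra ha0
      have ha1 : a (⟨1, by omega⟩ : Fin m) ≠ 0 := fun hc => hab _ ⟨hc, hB _⟩
      apply hprop (⟨0, by omega⟩ : Fin m) (⟨1, by omega⟩ : Fin m)
        (by intro hc; exact absurd (congrArg Fin.val hc) (by norm_num))
        (a ⟨0, by omega⟩ / a ⟨1, by omega⟩)
      rw [hℓ, hℓ, hB _, hB _]
      rw [smul_add, ← smul_mul_assoc, ← smul_mul_assoc, smul_eq_C_mul, smul_eq_C_mul,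
        ← C_mul, ← C_mul, div_mul_cancel₀ _ ha1, mul_zero], hB _⟩
  have hnc : ∀ v : Fin 2 → ℂ, ¬(v 0 = 0 ∧ v 1 = 0) →
      eval v g = 0 → eval v h = 0 → False := by
    intro v hv hgv hhv
    have hfv : eval v f = 0 := by
      have := congrArg (eval v) heuler
      simp only [map_add, map_mul, eval_C, eval_X, hgv, hhv, mul_zero, add_zero] at this
      exact (mul_eq_zero.mp this).resolve_left hm0
    rw [hf, map_prod] at hfv
    obtain ⟨i, -, hri⟩ := Finset.prod_eq_zero_iff.mp hfv
    obtain ⟨hgv', hhv'⟩ := hgeval v i hri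
    rw [hgv] at hgv'
    rw [hhv] at hhv'
    have hE : eval v (∏ j ∈ Finset.univ.erase i, ℓ j) = 0 := by
      rcases not_and_or.mp (hab i) with ha' | hb'
      · exact (mul_eq_zero.mp hgv'.symm).resolve_left ha'
      · exact (mul_eq_zero.mp hhv'.symm).resolve_left hb'
    rw [map_prod] at hE
    obtain ⟨j, hjmem, hrj⟩ := Finset.prod_eq_zero_iff.mp hE
    exact no2 j i (Finset.mem_erase.mp hjmem).1 v hv hrj hri
  have hCmU : IsUnit (C (m:ℂ) : MvPolynomial (Fin 2) ℂ) :=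
    (Ne.isUnit hm0).map (C : ℂ →+* MvPolynomial (Fin 2) ℂ)
  have hrel : IsRelPrime h g := by
    intro e he hg'
    by_contra hu
    have he0 : e ≠ 0 := by rintro rfl; exact hh0 (zero_dvd_iff.mp he)
    obtain ⟨p, hpirr, hpe⟩ := WfDvdMonoid.exists_irreducible_factor hu he0
    have hpprime : Prime p := UniqueFactorizationMonoid.irreducible_iff_prime.mp hpirr
    have hph : p ∣ h := hpe.trans he
    have hpg : p ∣ g := hpe.trans hg'
    have hpf : p ∣ f := by
      have h1 : p ∣ C (m:ℂ) * f := by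
        rw [heuler]; exact dvd_add (hpg.mul_left _) (hph.mul_left _)
      rcases hpprime.dvd_or_dvd h1 with h2 | h2
      · exact absurd (isUnit_of_dvd_unit h2 hCmU) hpirr.not_isUnit
      · exact h2
    obtain ⟨i, -, hpi⟩ := hpprime.exists_mem_finset_dvd (hf ▸ hpf)
    obtain ⟨q, hq⟩ := hpi
    have hp0' : p ≠ 0 := hpprime.ne_zero
    have hq0 : q ≠ 0 := by rintro rfl; rw [mul_zero] at hq; exact hne i hq
    have hdeg : (1:ℕ) = p.totalDegree + q.totalDegree := by
      rw [← (hhom i).totalDegree (hne i), hq, totalDegree_mul_eq hp0' hq0]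
    have hptne : p.totalDegree ≠ 0 := by
      intro hpt0
      have hpc := eqC_of_totalDegree_zero hpt0
      have hcc : coeff 0 p ≠ 0 := by
        intro hcc0; rw [hcc0, map_zero] at hpc; exact hp0' hpc
      exact hpirr.not_isUnit (hpc ▸ ((Ne.isUnit hcc).map (C : ℂ →+* MvPolynomial (Fin 2) ℂ)))
    have hqt : q.totalDegree = 0 := by omega
    obtain ⟨c, hqC, hc0⟩ : ∃ c : ℂ, q = C c ∧ c ≠ 0 := by
      refine ⟨coeff 0 q, eqC_of_totalDegree_zero hqt, ?_⟩
      intro hcc0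
      rw [eqC_of_totalDegree_zero hqt, hcc0, map_zero] at hq0
      exact hq0 rfl
    have hpeq : p = ℓ i * C c⁻¹ := by
      rw [hq, hqC, mul_assoc, ← C_mul, mul_inv_cancel₀ hc0, C_1, mul_one]
    obtain ⟨t, ht⟩ := hpg
    obtain ⟨s, hs⟩ := hph
    apply hnc (w i) (hw0 i)
    · rw [ht, hpeq, map_mul, map_mul, hwroot i, zero_mul, zero_mul]
    · rw [hs, hpeq, map_mul, map_mul, hwroot i, zero_mul, zero_mul]
  have hdvd : ∀ p q : MvPolynomial (Fin 2) ℂ, p * g = q * h → h ∣ p := by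
    intro p q hpq
    exact hrel.dvd_of_dvd_mul_right ⟨q, by rw [hpq, mul_comm]⟩
  have hfmem : f ∈ Ideal.span {g, h} := by
    have hfeq : f = C (m:ℂ)⁻¹ * (X 0 * g + X 1 * h) := by
      rw [← heuler, ← mul_assoc, ← C_mul, inv_mul_cancel₀ hm0, C_1, one_mul]
    rw [hfeq]
    apply Ideal.mul_mem_left
    exact Ideal.add_mem _
      (Ideal.mul_mem_left _ _ (Ideal.subset_span (Set.mem_insert _ _)))
      (Ideal.mul_mem_left _ _ (Ideal.subset_span (Set.mem_insert_of_mem _ rfl)))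
  have hspan : Ideal.span {f, g, h} = Ideal.span {g, h} := by
    rw [show ({f, g, h} : Set (MvPolynomial (Fin 2) ℂ)) = insert f {g, h} from rfl,
      Ideal.span_insert]
    exact sup_eq_right.mpr (by
      rwa [Ideal.span_le, Set.singleton_subset_iff, SetLike.mem_coe])
  clear_value g h
  have key : Module.finrank ℂ (MvPolynomial (Fin 2) ℂ ⧸ Ideal.span {g, h}) = (m-1)^2 := by
    interval_cases m
    · have hq : Module.finrank ℂ (MvPolynomial (Fin 2) ℂ ⧸ Ideal.span {g, h})
          = Module.finrank ℂ (restrictTotalDegree (Fin 2) ℂ 0) :=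
        mainDim1 hgh hhh hg0 hh0 hdvd
      rw [hq, finrank_rtd]
      decide
    · have hq : Module.finrank ℂ (MvPolynomial (Fin 2) ℂ ⧸ Ideal.span {g, h})
          + 2 * Module.finrank ℂ (restrictTotalDegree (Fin 2) ℂ (2-2))
          = Module.finrank ℂ (restrictTotalDegree (Fin 2) ℂ (2*2-2)) :=
        mainDim (d := 2) (by norm_num) hgh hhh hg0 hh0 hdvd
      rw [finrank_rtd, finrank_rtd] at hq
      have c1 : Fintype.card {p : Fin (2-2+1) × Fin (2-2+1) // p.1.1 + p.2.1 ≤ 2-2} = 1 := by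
        decide
      have c2 : Fintype.card {p : Fin (2*2-2+1) × Fin (2*2-2+1) // p.1.1 + p.2.1 ≤ 2*2-2} = 6 := by
        decide
      rw [c1, c2] at hq
      omega
    · have hq : Module.finrank ℂ (MvPolynomial (Fin 2) ℂ ⧸ Ideal.span {g, h})
          + 2 * Module.finrank ℂ (restrictTotalDegree (Fin 2) ℂ (3-2))
          = Module.finrank ℂ (restrictTotalDegree (Fin 2) ℂ (2*3-2)) :=
        mainDim (d := 3) (by norm_num) hgh hhh hg0 hh0 hdvd
      rw [finrank_rtd, finrank_rtd] at hq
      have c1 : Fintype.card {p : Fin (3-2+1) × Fin (3-2+1) // p.1.1 + p.2.1 ≤ 3-2} = 3 := by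
        decide
      have c2 : Fintype.card {p : Fin (2*3-2+1) × Fin (2*3-2+1) // p.1.1 + p.2.1 ≤ 2*3-2} = 15 := by
        decide
      rw [c1, c2] at hq
      omega
  refine ⟨key, ?_⟩
  rw [hspan]
  exact key
end

section
/- For d = 7, the nonnegative integer solutions (n₂,n₃,n₄) of the system { r² − 8r + 64 = n₂ + 4n₃ + 9n₄ and 35 = n₂ + 3n₃ + 6n₄ } with r ∈ {3,4} are exactly (5,2,4), (5,4,3), (8,1,4), (2,5,3), and (2,7,2). -/
/-- The nonnegative integer solutions of the Diophantine system governing weak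
combinatorics of free arrangements of 7 lines and one conic
(du Plessis–Wall freeness condition together with the naive Bézout count). -/
theorem solutions_d7 (n2 n3 n4 : ℕ) :
    (∃ r : ℕ, (r = 3 ∨ r = 4) ∧
      ((r : ℤ)^2 - 8*r + 64 : ℤ) = n2 + 4 * n3 + 9 * n4 ∧
      (35 : ℤ) = n2 + 3 * n3 + 6 * n4) ↔
    ((n2,n3,n4) = (5,2,4) ∨ (n2,n3,n4) = (5,4,3) ∨ (n2,n3,n4) = (8,1,4) ∨ (n2,n3,n4) = (2,5,3) ∨ (n2,n3,n4) = (2,7,2)) := by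
  constructor
  · rintro ⟨r, (rfl | rfl), h1, h2⟩ <;>
    · simp only [Prod.mk.injEq]
      push_cast at h1 h2
      omega
  · rintro (h | h | h | h | h) <;> simp_all [Prod.ext_iff] <;>
    · obtain ⟨rfl, rfl, rfl⟩ := h
      first
        | exact ⟨3, Or.inl rfl, by norm_num, by norm_num⟩
        | exact ⟨4, Or.inr rfl, by norm_num, by norm_num⟩
end
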